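/- arXiv:1703.09314 — 8 statements merged into one kernel-verified Lean document; each statement's English description precedes it below -/
import Mathlib

section
/- In RC∇, for all m < n, ◇ₙ(A ∧ ∇ₘB) = ◇ₙA ∧ ◇ₘB, i.e., both implications are derivable. -/
/-- Strictly positive formulas of RC∇: built from ⊤, variables, ∧, ◇ₙ and ∇ₙ. -/
inductive Fm : Type
  | top : Fm
  | var : ℕ → Fm
  | and : Fm → Fm → Fm
  | dia : ℕ → Fm → Fm
  | nab : ℕ → Fm → Fm

/-- Derivability of sequents `A ⊢ B` in RC∇. -/
inductive Prf : Fm → Fm → Prop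
  | refl (A) : Prf A A
  | top (A) : Prf A .top
  | cut {A B C} : Prf A B → Prf B C → Prf A C
  | andL (A B) : Prf (.and A B) A
  | andR (A B) : Prf (.and A B) B
  | andI {A B C} : Prf A B → Prf A C → Prf A (.and B C)
  | diaMono {A B} (n) : Prf A B → Prf (.dia n A) (.dia n B)
  | diaTrans (n A) : Prf (.dia n (.dia n A)) (.dia n A)
  | diaDown {m n} (A) : m < n → Prf (.dia n A) (.dia m A)
  | diaJ {m n} (A B) : m < n →
      Prf (.and (.dia n A) (.dia m B)) (.dia n (.and A (.dia m B)))
  | nabMono {A B} (n) : Prf A B → Prf (.nab n A) (.nab n B)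
  | nabTrans (n A) : Prf (.nab n (.nab n A)) (.nab n A)
  | nabDown {m n} (A) : m < n → Prf (.nab n A) (.nab m A)
  | nabJ {m n} (A B) : m < n →
      Prf (.and (.nab n A) (.nab m B)) (.nab n (.and A (.nab m B)))
  | nabIntro (n A) : Prf A (.nab n A)
  | diaNab (n A) : Prf (.dia n A) (.nab n A)
  | diaNabAbs {m n} (A) : m ≤ n → Prf (.dia m (.nab n A)) (.dia m A)
  | nabDiaAbs {m n} (A) : m ≤ n → Prf (.nab n (.dia m A)) (.dia m A)

namespace Prf

theorem and_mono_right {A B C : Fm} (h : Prf B C) : Prf (.and A B) (.and A C) :=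
  andI (andL A B) (cut (andR A B) h)

theorem diaDown_of_le {m n : ℕ} (A : Fm) (h : m ≤ n) : Prf (.dia n A) (.dia m A) := by
  rcases h.eq_or_lt with rfl | hlt
  · exact refl _
  · exact diaDown A hlt

theorem dia_nab_to_dia {m n : ℕ} (B : Fm) (h : m ≤ n) : Prf (.dia n (.nab m B)) (.dia m B) :=
  cut (diaDown_of_le _ h) (diaNabAbs B le_rfl)

theorem dia_and_nab_to_and_dia {m n : ℕ} (A B : Fm) (h : m ≤ n) :
    Prf (.dia n (.and A (.nab m B))) (.and (.dia n A) (.dia m B)) :=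
  andI (diaMono n (andL _ _)) (cut (diaMono n (andR _ _)) (dia_nab_to_dia B h))

theorem and_dia_to_dia_and_nab {m n : ℕ} (A B : Fm) (h : m < n) :
    Prf (.and (.dia n A) (.dia m B)) (.dia n (.and A (.nab m B))) :=
  cut (diaJ A B h) (diaMono n (and_mono_right (diaNab m B)))

end Prf

/-- In RC∇, for m < n, ◇ₙ(A ∧ ∇ₘB) = ◇ₙA ∧ ◇ₘB. -/
theorem stmt_2 (m n : ℕ) (hmn : m < n) (A B : Fm) :
    Prf (.dia n (.and A (.nab m B))) (.and (.dia n A) (.dia m B)) ∧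
    Prf (.and (.dia n A) (.dia m B)) (.dia n (.and A (.nab m B))) :=
  ⟨Prf.dia_and_nab_to_and_dia A B hmn.le, Prf.and_dia_to_dia_and_nab A B hmn⟩
end

section
/- In RC∇, for all m < n, ∇ₙ(A ∧ ◇ₘB) = ∇ₙA ∧ ◇ₘB. -/
namespace Prf

variable {A A' B B' : Fm} {m n : ℕ}

theorem andMap (hA : Prf A A') (hB : Prf B B') : Prf (.and A B) (.and A' B') :=
  .andI (.cut (.andL _ _) hA) (.cut (.andR _ _) hB)

theorem nab_and_dia_elim (hmn : m ≤ n) :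
    Prf (.nab n (.and A (.dia m B))) (.and (.nab n A) (.dia m B)) :=
  .andI (.nabMono n (.andL _ _)) (.cut (.nabMono n (.andR _ _)) (.nabDiaAbs _ hmn))

theorem nabJ_dia (hmn : m < n) :
    Prf (.and (.nab n A) (.dia m B)) (.nab n (.and A (.dia m B))) :=
  have lift : Prf (.and (.nab n A) (.dia m B)) (.and (.nab n A) (.nab m (.dia m B))) :=
    andMap (.refl _) (.nabIntro m _)
  have absorb : Prf (.and A (.nab m (.dia m B))) (.and A (.dia m B)) :=
    andMap (.refl _) (.nabDiaAbs _ le_rfl)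
  .cut lift (.cut (.nabJ A _ hmn) (.nabMono n absorb))

end Prf

/-- In RC∇, for m < n, ∇ₙ(A ∧ ◇ₘB) = ∇ₙA ∧ ◇ₘB. -/
theorem stmt_3 (m n : ℕ) (hmn : m < n) (A B : Fm) :
    Prf (.nab n (.and A (.dia m B))) (.and (.nab n A) (.dia m B)) ∧
    Prf (.and (.nab n A) (.dia m B)) (.nab n (.and A (.dia m B))) :=
  ⟨.nab_and_dia_elim hmn.le, .nabJ_dia hmn⟩
end

section
/- In RC∇, for every index i and formulas A, B: ◇ᵢA ∧ B = ∇ᵢ(◇ᵢA ∧ B) ∧ B and ∇ᵢA ∧ B = ∇ᵢ(∇ᵢA ∧ B) ∧ B. -/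
/-! Both `◇ᵢA` and `∇ᵢA` are `∇ᵢ`-closed, i.e. `∇ᵢC ⊢ C`. For such a `C`,
`C ∧ B ⊢ ∇ᵢ(C ∧ B) ∧ B` is an instance of `A ⊢ ∇ᵢA`, and conversely
`∇ᵢ(C ∧ B) ⊢ ∇ᵢC ⊢ C` by monotonicity. -/

namespace Prf

theorem and_equiv_nab_and_of_nab_le {i : ℕ} {C : Fm} (hC : Prf (.nab i C) C) (B : Fm) :
    Prf (.and C B) (.and (.nab i (.and C B)) B) ∧
      Prf (.and (.nab i (.and C B)) B) (.and C B) :=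
  ⟨andI (nabIntro i _) (andR _ _),
    andI (((andL _ _).cut (nabMono i (andL _ _))).cut hC) (andR _ _)⟩

theorem nab_dia_le (i : ℕ) (A : Fm) : Prf (.nab i (.dia i A)) (.dia i A) :=
  nabDiaAbs A le_rfl

end Prf

/-- In RC∇: ◇ᵢA ∧ B = ∇ᵢ(◇ᵢA ∧ B) ∧ B and ∇ᵢA ∧ B = ∇ᵢ(∇ᵢA ∧ B) ∧ B. -/
theorem stmt_4 (i : ℕ) (A B : Fm) :
    (Prf (.and (.dia i A) B) (.and (.nab i (.and (.dia i A) B)) B) ∧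
     Prf (.and (.nab i (.and (.dia i A) B)) B) (.and (.dia i A) B)) ∧
    (Prf (.and (.nab i A) B) (.and (.nab i (.and (.nab i A) B)) B) ∧
     Prf (.and (.nab i (.and (.nab i A) B)) B) (.and (.nab i A) B)) :=
  ⟨Prf.and_equiv_nab_and_of_nab_le (Prf.nab_dia_le i A) B,
    Prf.and_equiv_nab_and_of_nab_le (Prf.nabTrans i A) B⟩
end

section
/- Every strictly positive formula A of RC∇ is equivalent in RC∇ to an ordered formula, i.e., one in which no modality with smaller index occurs within the scope of a modality with larger index. -/
/-- All modality indices occurring in the formula are `≥ n`. -/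
def AllGE (n : ℕ) : Fm → Prop
  | .top => True
  | .var _ => True
  | .and A B => AllGE n A ∧ AllGE n B
  | .dia m A => n ≤ m ∧ AllGE n A
  | .nab m A => n ≤ m ∧ AllGE n A

/-- A formula is ordered if no modality with a smaller index occurs within the
scope of a modality with a larger index. -/
def Ordered : Fm → Prop
  | .top => True
  | .var _ => True
  | .and A B => Ordered A ∧ Ordered B
  | .dia m A => AllGE m A ∧ Ordered A
  | .nab m A => AllGE m A ∧ Ordered A

/-! The normal form is computed bottom-up. Under `◇ₙ` or `∇ₙ`, an already ordered body is split
along its top-level conjunction into conjuncts of outer index `≥ n`, which may stay inside, and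
conjuncts `◇ₘC`, `∇ₘC` with `m < n`, which are pulled out by the axioms `diaJ`, `nabJ`: for `m < n`
we have `◇ₙ(A ∧ ○ₘB) ≡ ◇ₙA ∧ ◇ₘB` and `∇ₙ(A ∧ ○ₘB) ≡ ∇ₙA ∧ ○ₘB`, where `○` is `◇` or `∇`. -/

def Eqv (A B : Fm) : Prop := Prf A B ∧ Prf B A

namespace Prf

theorem of_left {A B C : Fm} (h : Prf A C) : Prf (.and A B) C := (andL A B).cut h

theorem of_right {A B C : Fm} (h : Prf B C) : Prf (.and A B) C := (andR A B).cut h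

end Prf

namespace Eqv

theorem refl (A : Fm) : Eqv A A := ⟨.refl A, .refl A⟩

theorem symm {A B : Fm} (h : Eqv A B) : Eqv B A := ⟨h.2, h.1⟩

theorem trans {A B C : Fm} (h₁ : Eqv A B) (h₂ : Eqv B C) : Eqv A C :=
  ⟨h₁.1.cut h₂.1, h₂.2.cut h₁.2⟩

instance : Trans Eqv Eqv Eqv := ⟨trans⟩

theorem and_congr {A A' B B' : Fm} (hA : Eqv A A') (hB : Eqv B B') :
    Eqv (.and A B) (.and A' B') :=
  ⟨.andI (.of_left hA.1) (.of_right hB.1), .andI (.of_left hA.2) (.of_right hB.2)⟩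

theorem dia_congr (n : ℕ) {A B : Fm} (h : Eqv A B) : Eqv (.dia n A) (.dia n B) :=
  ⟨.diaMono n h.1, .diaMono n h.2⟩

theorem nab_congr (n : ℕ) {A B : Fm} (h : Eqv A B) : Eqv (.nab n A) (.nab n B) :=
  ⟨.nabMono n h.1, .nabMono n h.2⟩

theorem and_top (A : Fm) : Eqv (.and A .top) A :=
  ⟨.andL A .top, .andI (.refl A) (.top A)⟩

theorem top_and (A : Fm) : Eqv (.and .top A) A :=
  ⟨.andR .top A, .andI (.top A) (.refl A)⟩

theorem and_assoc (A B C : Fm) : Eqv (.and (.and A B) C) (.and A (.and B C)) :=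
  ⟨.andI (.of_left (.of_left (.refl A)))
     (.andI (.of_left (.of_right (.refl B))) (.of_right (.refl C))),
   .andI (.andI (.of_left (.refl A)) (.of_right (.of_left (.refl B))))
     (.of_right (.of_right (.refl C)))⟩

theorem and_and_and_comm (A B C D : Fm) :
    Eqv (.and (.and A B) (.and C D)) (.and (.and A C) (.and B D)) :=
  ⟨.andI (.andI (.of_left (.of_left (.refl A))) (.of_right (.of_left (.refl C))))
     (.andI (.of_left (.of_right (.refl B))) (.of_right (.of_right (.refl D)))),
   .andI (.andI (.of_left (.of_left (.refl A))) (.of_right (.of_left (.refl B))))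
     (.andI (.of_left (.of_right (.refl C))) (.of_right (.of_right (.refl D))))⟩

variable {m n : ℕ}

theorem dia_and_dia (h : m < n) (A B : Fm) :
    Eqv (.dia n (.and A (.dia m B))) (.and (.dia n A) (.dia m B)) :=
  ⟨.andI (.diaMono n (.andL A _))
     (((Prf.diaMono n (.andR A _)).cut (.diaDown _ h)).cut (.diaTrans m B)),
   .diaJ A B h⟩

theorem dia_and_nab (h : m < n) (A B : Fm) :
    Eqv (.dia n (.and A (.nab m B))) (.and (.dia n A) (.dia m B)) :=
  ⟨.andI (.diaMono n (.andL A _))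
     (((Prf.diaMono n (.andR A _)).cut (.diaDown _ h)).cut (.diaNabAbs B le_rfl)),
   (Prf.diaJ A B h).cut
     (.diaMono n (.andI (.andL A _) ((Prf.andR A _).cut (.diaNab m B))))⟩

/-- The reverse direction passes through `∇ₙA ∧ ∇ₘ◇ₘB` to apply `nabJ`. -/
theorem nab_and_dia (h : m < n) (A B : Fm) :
    Eqv (.nab n (.and A (.dia m B))) (.and (.nab n A) (.dia m B)) :=
  ⟨.andI (.nabMono n (.andL A _))
     ((Prf.nabMono n (.andR A _)).cut (.nabDiaAbs B h.le)),
   (Prf.andI (.of_left (.refl _)) (.of_right (.nabIntro m _))).cut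
     ((Prf.nabJ A (.dia m B) h).cut
       (.nabMono n (.andI (.andL A _) ((Prf.andR A _).cut (.nabDiaAbs B le_rfl)))))⟩

theorem nab_and_nab (h : m < n) (A B : Fm) :
    Eqv (.nab n (.and A (.nab m B))) (.and (.nab n A) (.nab m B)) :=
  ⟨.andI (.nabMono n (.andL A _))
     (((Prf.nabMono n (.andR A _)).cut (.nabDown _ h)).cut (.nabTrans m B)),
   .nabJ A B h⟩

end Eqv

theorem AllGE.mono {m n : ℕ} (h : m ≤ n) {A : Fm} (hA : AllGE n A) : AllGE m A := by
  induction A with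
  | top | var => trivial
  | and A B ihA ihB => exact ⟨ihA hA.1, ihB hA.2⟩
  | dia k A ih | nab k A ih => exact ⟨h.trans hA.1, ih hA.2⟩

namespace Fm

/-- The conjuncts of the top-level conjunction of a formula whose outer modality has index `≥ n`,
with `⊤` in place of the others. -/
def high (n : ℕ) : Fm → Fm
  | top => top
  | var p => var p
  | and A B => and (high n A) (high n B)
  | dia m A => if m < n then top else dia m A
  | nab m A => if m < n then top else nab m A

def low (n : ℕ) : Fm → Fm
  | and A B => and (low n A) (low n B)
  | dia m A => if m < n then dia m A else top
  | nab m A => if m < n then nab m A else top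
  | _ => top

def IsLow (n : ℕ) : Fm → Prop
  | top => True
  | var _ => False
  | and A B => IsLow n A ∧ IsLow n B
  | dia m _ => m < n
  | nab m _ => m < n

def nabToDia : Fm → Fm
  | and A B => and (nabToDia A) (nabToDia B)
  | nab m A => dia m A
  | A => A

def order : Fm → Fm
  | top => top
  | var p => var p
  | and A B => and (order A) (order B)
  | dia n A => and (dia n (high n (order A))) (nabToDia (low n (order A)))
  | nab n A => and (nab n (high n (order A))) (low n (order A))

theorem isLow_low (n : ℕ) (A : Fm) : IsLow n (low n A) := by
  induction A with
  | and A B ihA ihB => exact ⟨ihA, ihB⟩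
  | dia m A | nab m A => unfold low; split_ifs with h; exacts [h, trivial]
  | top | var => trivial

theorem eqv_and_high_low (n : ℕ) (A : Fm) : Eqv A (and (high n A) (low n A)) := by
  induction A with
  | top | var => exact (Eqv.and_top _).symm
  | and A B ihA ihB => exact (ihA.and_congr ihB).trans (Eqv.and_and_and_comm _ _ _ _)
  | dia m A | nab m A =>
    unfold high low
    split_ifs
    exacts [(Eqv.top_and _).symm, (Eqv.and_top _).symm]

theorem eqv_nab_and_of_isLow {n : ℕ} {Q : Fm} (hQ : IsLow n Q) (P : Fm) :
    Eqv (nab n (and P Q)) (and (nab n P) Q) := by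
  induction Q generalizing P with
  | top => exact (Eqv.nab_congr n (Eqv.and_top P)).trans (Eqv.and_top _).symm
  | var => exact hQ.elim
  | and Q₁ Q₂ ih₁ ih₂ =>
    calc Eqv (nab n (and P (and Q₁ Q₂))) (nab n (and (and P Q₁) Q₂)) :=
          Eqv.nab_congr n (Eqv.and_assoc _ _ _).symm
      Eqv _ (and (nab n (and P Q₁)) Q₂) := ih₂ hQ.2 _
      Eqv _ (and (and (nab n P) Q₁) Q₂) := (ih₁ hQ.1 P).and_congr (.refl _)
      Eqv _ (and (nab n P) (and Q₁ Q₂)) := Eqv.and_assoc _ _ _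
  | dia m C => exact Eqv.nab_and_dia hQ P C
  | nab m C => exact Eqv.nab_and_nab hQ P C

theorem eqv_dia_and_of_isLow {n : ℕ} {Q : Fm} (hQ : IsLow n Q) (P : Fm) :
    Eqv (dia n (and P Q)) (and (dia n P) (nabToDia Q)) := by
  induction Q generalizing P with
  | top => exact (Eqv.dia_congr n (Eqv.and_top P)).trans (Eqv.and_top _).symm
  | var => exact hQ.elim
  | and Q₁ Q₂ ih₁ ih₂ =>
    calc Eqv (dia n (and P (and Q₁ Q₂))) (dia n (and (and P Q₁) Q₂)) :=
          Eqv.dia_congr n (Eqv.and_assoc _ _ _).symm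
      Eqv _ (and (dia n (and P Q₁)) (nabToDia Q₂)) := ih₂ hQ.2 _
      Eqv _ (and (and (dia n P) (nabToDia Q₁)) (nabToDia Q₂)) :=
          (ih₁ hQ.1 P).and_congr (.refl _)
      Eqv _ (and (dia n P) (and (nabToDia Q₁) (nabToDia Q₂))) := Eqv.and_assoc _ _ _
  | dia m C => exact Eqv.dia_and_dia hQ P C
  | nab m C => exact Eqv.dia_and_nab hQ P C

theorem eqv_order (A : Fm) : Eqv A (order A) := by
  induction A with
  | top | var => exact .refl _
  | and A B ihA ihB => exact ihA.and_congr ihB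
  | dia n A ih =>
    exact ((Eqv.dia_congr n (ih.trans (eqv_and_high_low n _))).trans
      (eqv_dia_and_of_isLow (isLow_low n _) _))
  | nab n A ih =>
    exact ((Eqv.nab_congr n (ih.trans (eqv_and_high_low n _))).trans
      (eqv_nab_and_of_isLow (isLow_low n _) _))

theorem allGE_high (n : ℕ) {A : Fm} (hA : Ordered A) : AllGE n (high n A) := by
  induction A with
  | top | var => trivial
  | and A B ihA ihB => exact ⟨ihA hA.1, ihB hA.2⟩
  | dia m A | nab m A =>
    obtain ⟨hge, -⟩ := hA
    unfold high
    split_ifs with h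
    · trivial
    · exact ⟨not_lt.1 h, hge.mono (not_lt.1 h)⟩

theorem ordered_high (n : ℕ) {A : Fm} (hA : Ordered A) : Ordered (high n A) := by
  induction A with
  | top | var => trivial
  | and A B ihA ihB => exact ⟨ihA hA.1, ihB hA.2⟩
  | dia m A | nab m A => unfold high; split_ifs; exacts [trivial, hA]

theorem ordered_low (n : ℕ) {A : Fm} (hA : Ordered A) : Ordered (low n A) := by
  induction A with
  | top | var => trivial
  | and A B ihA ihB => exact ⟨ihA hA.1, ihB hA.2⟩
  | dia m A | nab m A => unfold low; split_ifs; exacts [hA, trivial]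

theorem ordered_nabToDia {A : Fm} (hA : Ordered A) : Ordered (nabToDia A) := by
  induction A with
  | and A B ihA ihB => exact ⟨ihA hA.1, ihB hA.2⟩
  | top | var | dia | nab => exact hA

theorem ordered_order (A : Fm) : Ordered (order A) := by
  induction A with
  | top | var => trivial
  | and A B ihA ihB => exact ⟨ihA, ihB⟩
  | dia n A ih =>
    simp only [order, Ordered]
    exact ⟨⟨allGE_high n ih, ordered_high n ih⟩, ordered_nabToDia (ordered_low n ih)⟩
  | nab n A ih =>
    simp only [order, Ordered]
    exact ⟨⟨allGE_high n ih, ordered_high n ih⟩, ordered_low n ih⟩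

end Fm

/-- Every RC∇-formula is equivalent in RC∇ to an ordered one. -/
theorem stmt_6 (A : Fm) : ∃ B : Fm, Ordered B ∧ Prf A B ∧ Prf B A :=
  ⟨A.order, A.ordered_order, A.eqv_order⟩
end

section
/- Assume that for every variable-free RC∇-formula A, A does not prove ◇ₙA (irreflexivity). Then for all variable-free RC∇-formulas A, B in the signature restricted to indices ≥ n: ◇ₙA ⊢ ◇ₙB if and only if A ⊢ ∇ₙB. -/
/-- The formula contains no propositional variables. -/
def VarFree : Fm → Prop
  | .top => True
  | .var _ => False
  | .and A B => VarFree A ∧ VarFree B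
  | .dia _ A => VarFree A
  | .nab _ A => VarFree A

namespace Prf

theorem dia_of_nab {n : ℕ} {A B : Fm} (h : Prf A (.nab n B)) : Prf (.dia n A) (.dia n B) :=
  (diaMono n h).cut (diaNabAbs B le_rfl)

theorem nab_of_dia {n : ℕ} {A B : Fm} (irrB : ¬ Prf B (.dia n B))
    (cmp : Prf A (.dia n B) ∨ Prf B (.dia n A) ∨ Prf (.nab n A) (.nab n B))
    (h : Prf (.dia n A) (.dia n B)) : Prf A (.nab n B) := by
  rcases cmp with hAB | hBA | hnab
  · exact hAB.cut (diaNab n B)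
  · exact absurd (hBA.cut h) irrB
  · exact (nabIntro n A).cut hnab

end Prf

/-- Assuming irreflexivity and linearity, for variable-free A, B over indices ≥ n:
◇ₙA ⊢ ◇ₙB iff A ⊢ ∇ₙB. -/
theorem stmt_7 (n : ℕ)
    (irr : ∀ (A : Fm) (m : ℕ), VarFree A → ¬ Prf A (.dia m A))
    (lin : ∀ A B : Fm, VarFree A → AllGE n A → VarFree B → AllGE n B →
      Prf A (.dia n B) ∨ Prf B (.dia n A) ∨
        (Prf (.nab n A) (.nab n B) ∧ Prf (.nab n B) (.nab n A))) :
    ∀ A B : Fm, VarFree A → AllGE n A → VarFree B → AllGE n B →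
      (Prf (.dia n A) (.dia n B) ↔ Prf A (.nab n B)) := by
  intro A B vA gA vB gB
  have cmp := (lin A B vA gA vB gB).imp_right (Or.imp_right And.left)
  exact ⟨Prf.nab_of_dia (irr B n vB) cmp, Prf.dia_of_nab⟩
end

section
/- For every formula A of RC, A ⊬_RC ◇₀A; i.e., the relation <₀ defined by A <₀ B iff B ⊢_RC ◇₀A is irreflexive. -/
/-!
We use an Ignatiev-style universal model. A world is a sequence of ordinals `x₀, x₁, …`, all at
least `ε₀`, with `ω ^ x (n+1)` dividing `x n`; `◇ₙ` looks at the worlds that agree with the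
current one below `n` and are strictly smaller at `n`. Every formula `A` holds exactly at the
worlds dominating a requirement vector `req A`, and there is a least such world. RC is sound for
this model, so if `A ⊢ ◇₀A` then the least `A`-world would see an `A`-world with a smaller
`0`-th coordinate, which is impossible.
-/

/-- Strictly positive formulas of the reflection calculus RC. -/
inductive RCFormula : Type
  | top : RCFormula
  | var : ℕ → RCFormula
  | and : RCFormula → RCFormula → RCFormula
  | dia : ℕ → RCFormula → RCFormula

/-- Derivability of sequents `A ⊢ B` in RC. -/
inductive RCPrf : RCFormula → RCFormula → Prop
  | refl (A) : RCPrf A A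
  | top (A) : RCPrf A .top
  | cut {A B C} : RCPrf A B → RCPrf B C → RCPrf A C
  | andL (A B) : RCPrf (.and A B) A
  | andR (A B) : RCPrf (.and A B) B
  | andI {A B C} : RCPrf A B → RCPrf A C → RCPrf A (.and B C)
  | mono {A B} (n) : RCPrf A B → RCPrf (.dia n A) (.dia n B)
  | trans (n A) : RCPrf (.dia n (.dia n A)) (.dia n A)
  | down {m n} (A) : m < n → RCPrf (.dia n A) (.dia m A)
  | J {m n} (A B) : m < n →
      RCPrf (.and (.dia n A) (.dia m B)) (.dia n (.and A (.dia m B)))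

open Ordinal Order

namespace RC

theorem downward_induction {K : ℕ} {P : ℕ → Prop} (base : ∀ j, K ≤ j → P j)
    (step : ∀ j < K, P (j + 1) → P j) (j : ℕ) : P j := by
  induction h : K - j generalizing j with
  | zero => exact base j (by omega)
  | succ d ih => exact step j (by omega) (ih (j + 1) (by omega))

section CeilQuot

noncomputable def ceilQuot (f b : Ordinal) : Ordinal := sInf {c | 1 ≤ c ∧ f ≤ b * c}

variable {f b c : Ordinal}

theorem ceilQuot_spec (hb : b ≠ 0) : 1 ≤ ceilQuot f b ∧ f ≤ b * ceilQuot f b :=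
  csInf_mem (s := {c | 1 ≤ c ∧ f ≤ b * c})
    ⟨f + 1, le_add_self, le_self_add.trans (le_mul_right _ (pos_iff_ne_zero.2 hb))⟩

theorem ceilQuot_le (h1 : 1 ≤ c) (h : f ≤ b * c) : ceilQuot f b ≤ c :=
  csInf_le' ⟨h1, h⟩

theorem ceilQuot_zero (b : Ordinal) : ceilQuot 0 b = 1 :=
  le_antisymm (ceilQuot_le le_rfl zero_le) (le_csInf ⟨1, le_rfl, zero_le⟩ fun _ h => h.1)

theorem not_isSuccLimit_ceilQuot (hb : b ≠ 0) (hf : ¬IsSuccLimit f) :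
    ¬IsSuccLimit (ceilQuot f b) := by
  intro hlim
  obtain ⟨h1, hle⟩ := ceilQuot_spec (f := f) hb
  rcases hle.lt_or_eq with hlt | heq
  · obtain ⟨c', hc', hfc'⟩ := (lt_mul_iff_of_isSuccLimit hlim).1 hlt
    have hmax : ceilQuot f b ≤ max c' 1 :=
      ceilQuot_le (le_max_right _ _) (hfc'.le.trans (mul_le_mul_right (le_max_left _ _) _))
    have h1lt : 1 < ceilQuot f b := by simpa using hlim.succ_lt hlim.bot_lt
    exact hmax.not_gt (max_lt hc' h1lt)
  · exact hf (heq ▸ isSuccLimit_mul_right (pos_iff_ne_zero.2 hb) hlim)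

end CeilQuot

/-- The divisibility condition is what makes `◇ₙA → ◇ₘA` (`m < n`) valid, see
`World.opow_mul_ceilQuot_lt`; `ε₀ = ω ^ ε₀` anchors the tail of the sequence. -/
structure World where
  toFun : ℕ → Ordinal.{0}
  epsilon_zero_le : ∀ n, ε₀ ≤ toFun n
  exists_eq_opow_mul : ∀ n, ∃ q, 1 ≤ q ∧ toFun n = ω ^ toFun (n + 1) * q

namespace World

instance : CoeFun World fun _ => ℕ → Ordinal.{0} := ⟨toFun⟩

theorem exists_eq_opow_mul_of_le (x : World) {n : ℕ} {γ : Ordinal} (h : γ ≤ x (n + 1)) :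
    ∃ q, 1 ≤ q ∧ x n = ω ^ γ * q := by
  obtain ⟨q, hq, hx⟩ := x.exists_eq_opow_mul n
  refine ⟨ω ^ (x (n + 1) - γ) * q, ?_, ?_⟩
  · exact one_le_iff_pos.2 (mul_pos (opow_pos _ omega0_pos) (one_le_iff_pos.1 hq))
  · rw [← mul_assoc, ← opow_add, Ordinal.add_sub_cancel_of_le h, hx]

def Rel (n : ℕ) (x y : World) : Prop := (∀ i < n, y i = x i) ∧ y n < x n

def splice (x y : World) (n : ℕ) (h : y n ≤ x n) : World where
  toFun j := if j < n then x j else y j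
  epsilon_zero_le j := by
    split_ifs
    · exact x.epsilon_zero_le j
    · exact y.epsilon_zero_le j
  exists_eq_opow_mul j := by
    by_cases hj : j + 1 < n
    · simp only [hj, show j < n by omega, if_true]
      exact x.exists_eq_opow_mul j
    by_cases hjn : j + 1 = n
    · simp only [hj, show j < n by omega, if_true, if_false]
      exact x.exists_eq_opow_mul_of_le (hjn ▸ h)
    · simp only [hj, show ¬j < n by omega, if_false]
      exact y.exists_eq_opow_mul j

theorem rel_splice {x y : World} {n : ℕ} (h : y n < x n) : x.Rel n (x.splice y n h.le) :=
  ⟨fun i hi => if_pos hi, by simpa [splice] using h⟩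

theorem opow_mul_ceilQuot_lt (x : World) {j : ℕ} {γ f : Ordinal} (hγ : γ < x (j + 1))
    (hf : f ≤ x j) (hlim : ¬IsSuccLimit f) : ω ^ γ * ceilQuot f (ω ^ γ) < x j := by
  -- `x j = ω ^ γ * (ω * q)` with `ω * q` a limit, while the quotient of `f` is not.
  obtain ⟨q, hq, hx⟩ := x.exists_eq_opow_mul_of_le (succ_le_of_lt hγ)
  rw [succ_eq_add_one, opow_add, opow_one, mul_assoc] at hx
  have hlimit : IsSuccLimit (ω * q) := isSuccLimit_mul_left isSuccLimit_omega0 (one_le_iff_pos.1 hq)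
  have hle : ceilQuot f (ω ^ γ) ≤ ω * q :=
    ceilQuot_le ((one_le_iff_pos.2 omega0_pos).trans (le_mul_left _ (one_le_iff_pos.1 hq)))
      (hx ▸ hf)
  have hne : ceilQuot f (ω ^ γ) ≠ ω * q := fun h =>
    not_isSuccLimit_ceilQuot (opow_ne_zero _ omega0_ne_zero) hlim (h ▸ hlimit)
  rw [hx]
  exact mul_lt_mul_of_pos_left (hle.lt_of_ne hne) (opow_pos _ omega0_pos)

end World

section Hull

/-- `hull φ K` is the least world dominating `φ`, provided `φ` vanishes from `K` on. -/
noncomputable def hull (φ : ℕ → Ordinal.{0}) (K j : ℕ) : Ordinal.{0} :=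
  if K ≤ j then ε₀ else ω ^ hull φ K (j + 1) * ceilQuot (φ j) (ω ^ hull φ K (j + 1))
termination_by K - j

variable {φ ψ : ℕ → Ordinal.{0}} {K K' : ℕ}

theorem hull_of_le {j : ℕ} (h : K ≤ j) : hull φ K j = ε₀ := by
  rw [hull, if_pos h]

theorem hull_eq (hφ : ∀ i, K ≤ i → φ i = 0) (j : ℕ) :
    hull φ K j = ω ^ hull φ K (j + 1) * ceilQuot (φ j) (ω ^ hull φ K (j + 1)) := by
  by_cases h : K ≤ j
  · rw [hull_of_le h, hull_of_le (by omega), hφ j h, ceilQuot_zero, mul_one,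
      omega0_opow_epsilon]
  · rw [hull, if_neg h]

theorem epsilon_zero_le_hull (hφ : ∀ i, K ≤ i → φ i = 0) : ∀ j, ε₀ ≤ hull φ K j :=
  downward_induction (fun j hj => (hull_of_le hj).ge) fun j _ ih => by
    rw [hull_eq hφ, ← omega0_opow_epsilon 0]
    calc ω ^ ε₀ ≤ ω ^ hull φ K (j + 1) := opow_le_opow_right omega0_pos ih
      _ ≤ _ := le_mul_left _ (one_le_iff_pos.1
          (ceilQuot_spec (opow_ne_zero _ omega0_ne_zero)).1)

theorem le_hull (hφ : ∀ i, K ≤ i → φ i = 0) (j : ℕ) : φ j ≤ hull φ K j := by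
  rw [hull_eq hφ]
  exact (ceilQuot_spec (opow_ne_zero _ omega0_ne_zero)).2

noncomputable def hullWorld (φ : ℕ → Ordinal.{0}) (K : ℕ) (hφ : ∀ i, K ≤ i → φ i = 0) :
    World where
  toFun := hull φ K
  epsilon_zero_le := epsilon_zero_le_hull hφ
  exists_eq_opow_mul j := ⟨_, (ceilQuot_spec (opow_ne_zero _ omega0_ne_zero)).1, hull_eq hφ j⟩

theorem hull_le (x : World) (hx : ∀ i, φ i ≤ x i) : ∀ j, hull φ K j ≤ x j :=
  downward_induction (fun j hj => (hull_of_le hj).trans_le (x.epsilon_zero_le j))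
    fun j hj ih => by
      obtain ⟨q, hq, hxj⟩ := x.exists_eq_opow_mul_of_le ih
      rw [hull, if_neg (by omega), hxj]
      exact mul_le_mul_right (ceilQuot_le hq (hxj ▸ hx j)) _

theorem hull_congr (hφ : ∀ i, K ≤ i → φ i = 0) (hψ : ∀ i, K' ≤ i → ψ i = 0) {n : ℕ}
    (h : ∀ i, n ≤ i → φ i = ψ i) : hull φ K n = hull ψ K' n := by
  refine downward_induction (K := max K K') (P := fun j => n ≤ j → hull φ K j = hull ψ K' j)
    (fun j hj _ => ?_) (fun j _ ih hnj => ?_) n le_rfl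
  · rw [hull_of_le (le_of_max_le_left hj), hull_of_le (le_of_max_le_right hj)]
  · rw [hull_eq hφ, hull_eq hψ, ih (by omega), h j hnj]

theorem hull_lt_of_le_of_lt (hφ : ∀ i, K ≤ i → φ i = 0) (hlim : ∀ i, ¬IsSuccLimit (φ i))
    (x : World) {n : ℕ} (hle : ∀ i < n, φ i ≤ x i) (hn : hull φ K n < x n) {m : ℕ}
    (hm : m ≤ n) : hull φ K m < x m := by
  induction hm using Nat.decreasingInduction with
  | self => exact hn
  | of_succ j hj ih =>
    rw [hull_eq hφ]
    exact x.opow_mul_ceilQuot_lt ih (hle j hj) (hlim j)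

end Hull

def idxBound : RCFormula → ℕ
  | .top => 0
  | .var _ => 0
  | .and A B => max (idxBound A) (idxBound B)
  | .dia n A => max (n + 1) (idxBound A)

noncomputable def req : RCFormula → ℕ → Ordinal.{0}
  | .top, _ => 0
  | .var _, _ => 0
  | .and A B, i => max (req A i) (req B i)
  | .dia n A, i => if i < n then req A i else if i = n then hull (req A) (idxBound A) n + 1 else 0

theorem req_eq_zero : ∀ (A : RCFormula) (i : ℕ), idxBound A ≤ i → req A i = 0
  | .top, _, _ => rfl
  | .var _, _, _ => rfl
  | .and A B, i, h => by
    simp only [req, idxBound, max_le_iff] at h ⊢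
    rw [req_eq_zero A i h.1, req_eq_zero B i h.2, max_self]
  | .dia n A, i, h => by
    simp only [req, idxBound, max_le_iff] at h ⊢
    rw [if_neg (by omega), if_neg (by omega)]

theorem not_isSuccLimit_req : ∀ (A : RCFormula) (i : ℕ), ¬IsSuccLimit (req A i)
  | .top, _ => not_isSuccLimit_bot
  | .var _, _ => not_isSuccLimit_bot
  | .and A B, i => by
    simp only [req]
    rcases le_total (req A i) (req B i) with h | h
    · rw [max_eq_right h]; exact not_isSuccLimit_req B i
    · rw [max_eq_left h]; exact not_isSuccLimit_req A i
  | .dia n A, i => by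
    simp only [req]
    split_ifs
    · exact not_isSuccLimit_req A i
    · exact not_isSuccLimit_succ _
    · exact not_isSuccLimit_bot

noncomputable def leastWorld (A : RCFormula) : World :=
  hullWorld (req A) (idxBound A) (req_eq_zero A)

theorem leastWorld_apply (A : RCFormula) (i : ℕ) :
    leastWorld A i = hull (req A) (idxBound A) i := rfl

theorem le_leastWorld (A : RCFormula) (i : ℕ) : req A i ≤ leastWorld A i :=
  le_hull (req_eq_zero A) i

theorem leastWorld_le (A : RCFormula) {x : World} (hx : ∀ i, req A i ≤ x i) (i : ℕ) :
    leastWorld A i ≤ x i :=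
  hull_le x hx i

theorem req_dia_le_iff {n : ℕ} {A : RCFormula} {x : World} :
    (∀ i, req (.dia n A) i ≤ x i) ↔ (∀ i < n, req A i ≤ x i) ∧ leastWorld A n < x n := by
  refine ⟨fun h => ⟨fun i hi => ?_, ?_⟩, fun ⟨hlt, hn⟩ i => ?_⟩
  · simpa [req, hi] using h i
  · simpa [req, leastWorld_apply, succ_le_iff] using h n
  · simp only [req]
    split_ifs with h1 h2
    · exact hlt i h1
    · subst h2
      exact add_one_le_iff.2 hn
    · exact zero_le

/-- Variables are true at every world; any valuation would do. -/
def Forces : RCFormula → World → Prop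
  | .top, _ => True
  | .var _, _ => True
  | .and A B, x => Forces A x ∧ Forces B x
  | .dia n A, x => ∃ y, x.Rel n y ∧ Forces A y

theorem forces_dia_iff_of {n : ℕ} {A : RCFormula} (hA : ∀ y, Forces A y ↔ ∀ i, req A i ≤ y i)
    (x : World) :
    Forces (.dia n A) x ↔ (∀ i < n, req A i ≤ x i) ∧ leastWorld A n < x n := by
  constructor
  · rintro ⟨y, ⟨hyx, hyn⟩, hy⟩
    have hreq := (hA y).1 hy
    exact ⟨fun i hi => hyx i hi ▸ hreq i, (leastWorld_le A hreq n).trans_lt hyn⟩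
  · rintro ⟨hlt, hn⟩
    refine ⟨x.splice (leastWorld A) n hn.le, World.rel_splice hn, (hA _).2 fun i => ?_⟩
    by_cases hi : i < n
    · simpa [World.splice, hi] using hlt i hi
    · simpa [World.splice, hi] using le_leastWorld A i

theorem forces_iff_req_le : ∀ (A : RCFormula) (x : World), Forces A x ↔ ∀ i, req A i ≤ x i
  | .top, _ => by simp [Forces, req]
  | .var _, _ => by simp [Forces, req]
  | .and A B, x => by
    simp only [Forces, req, max_le_iff, forces_iff_req_le A, forces_iff_req_le B, forall_and]
  | .dia n A, x => (forces_dia_iff_of (forces_iff_req_le A) x).trans req_dia_le_iff.symm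

theorem forces_dia_iff {n : ℕ} {A : RCFormula} {x : World} :
    Forces (.dia n A) x ↔ (∀ i < n, req A i ≤ x i) ∧ leastWorld A n < x n :=
  forces_dia_iff_of (forces_iff_req_le A) x

theorem forces_leastWorld (A : RCFormula) : Forces A (leastWorld A) :=
  (forces_iff_req_le A _).2 (le_leastWorld A)

theorem forces_dia_of_lt {m n : ℕ} (hmn : m < n) {A : RCFormula} {x : World}
    (h : Forces (.dia n A) x) : Forces (.dia m A) x := by
  obtain ⟨hlt, hn⟩ := forces_dia_iff.1 h
  refine forces_dia_iff.2 ⟨fun i hi => hlt i (hi.trans hmn), ?_⟩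
  exact hull_lt_of_le_of_lt (req_eq_zero A) (not_isSuccLimit_req A) x hlt hn hmn.le

theorem leastWorld_and_dia {m n : ℕ} (hmn : m < n) (A B : RCFormula) :
    leastWorld (.and A (.dia m B)) n = leastWorld A n :=
  hull_congr (req_eq_zero _) (req_eq_zero A) fun i hi => by
    simp [req, show ¬i < m by omega, show i ≠ m by omega]

theorem forces_J {m n : ℕ} (hmn : m < n) {A B : RCFormula} {x : World}
    (hA : Forces (.dia n A) x) (hB : Forces (.dia m B) x) :
    Forces (.dia n (.and A (.dia m B))) x := by
  obtain ⟨hlt, hn⟩ := forces_dia_iff.1 hA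
  have hreqB := (forces_iff_req_le _ x).1 hB
  refine forces_dia_iff.2 ⟨fun i hi => max_le (hlt i hi) (hreqB i), ?_⟩
  rwa [leastWorld_and_dia hmn]

theorem forces_of_rcPrf {A B : RCFormula} (h : RCPrf A B) (x : World) (hA : Forces A x) :
    Forces B x := by
  induction h generalizing x with
  | refl => exact hA
  | top => trivial
  | cut _ _ ih₁ ih₂ => exact ih₂ x (ih₁ x hA)
  | andL => exact hA.1
  | andR => exact hA.2
  | andI _ _ ih₁ ih₂ => exact ⟨ih₁ x hA, ih₂ x hA⟩
  | mono _ _ ih =>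
    obtain ⟨y, hxy, hy⟩ := hA
    exact ⟨y, hxy, ih y hy⟩
  | trans =>
    obtain ⟨y, ⟨hyx, hyn⟩, z, ⟨hzy, hzn⟩, hz⟩ := hA
    exact ⟨z, ⟨fun i hi => (hzy i hi).trans (hyx i hi), hzn.trans hyn⟩, hz⟩
  | down _ hmn => exact forces_dia_of_lt hmn hA
  | J _ _ hmn => exact forces_J hmn hA.1 hA.2

end RC

/-- For every RC-formula A, A ⊬ ◇₀A; hence `<₀` is irreflexive. -/
theorem stmt_8 (A : RCFormula) : ¬ RCPrf A (.dia 0 A) := by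
  intro h
  have hdia : RC.Forces (.dia 0 A) (RC.leastWorld A) :=
    RC.forces_of_rcPrf h _ (RC.forces_leastWorld A)
  exact lt_irrefl _ (RC.forces_dia_iff.1 hdia).2
end

section
/- Let ℓ : Ordinal → Ordinal be defined by ℓ(0)=0 and ℓ(β)=γ when β = δ + ω^γ with ω^γ the last term of the Cantor normal form of β. Then the set I of sequences α : ℕ → Ordinal with αᵢ < ε₀ for all i and α_{i+1} ≤ ℓ(αᵢ) for all i, ordered by α ≤ β iff αₙ ≥ βₙ for all n, is a meet-semilattice: any two elements have a greatest lower bound. -/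
open Ordinal

/-- `ell β` is the exponent of the last (smallest) term of the Cantor normal
form of `β` (base ω), with `ell 0 = 0`. -/
noncomputable def ell (b : Ordinal) : Ordinal :=
  ((Ordinal.CNF omega0 b).map Prod.fst).getLastD 0

/-- `ε₀`, the least ordinal `α` with `ω ^ α = α`. -/
noncomputable def eps0 : Ordinal := Ordinal.nfp (fun a => omega0 ^ a) 0

/-- Membership in the Ignatiev set `I`: sequences of ordinals below `ε₀` with
`α (i+1) ≤ ℓ (α i)` for all `i`. -/
def IgMem (a : ℕ → Ordinal) : Prop :=
  (∀ i, a i < eps0) ∧ ∀ i, a (i + 1) ≤ ell (a i)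

/-! The meet of `a` and `b` is the coordinatewise infimum `c` of all members of `I` that lie
above both in the ordinal order. It stays in `I` because in each coordinate the infimum is
attained by some member `d`, whence `c (i + 1) ≤ d (i + 1) ≤ ℓ (d i) = ℓ (c i)`. That set is
nonempty: below `ε₀` one has `ℓ β ≤ log_ω β < β` for `β ≠ 0`, so members of `I` vanish from some
index on, and from there a common upper bound is built backwards by
`d i = ω ^ (d (i + 1) + max (a i) (b i))`, using `ℓ (ω ^ γ) = γ`. -/

lemma eps0_eq_epsilon_zero : eps0 = ε₀ := epsilon_zero_eq_nfp.symm

lemma omega0_opow_lt_eps0 {γ : Ordinal} (h : γ < eps0) : ω ^ γ < eps0 := by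
  rw [eps0_eq_epsilon_zero] at h ⊢
  simpa only [omega0_opow_epsilon] using (opow_lt_opow_iff_right one_lt_omega0).2 h

lemma add_lt_eps0 {x y : Ordinal} (hx : x < eps0) (hy : y < eps0) : x + y < eps0 := by
  rw [eps0_eq_epsilon_zero, ← omega0_opow_epsilon] at hx hy ⊢
  exact isPrincipal_add_omega0_opow _ hx hy

lemma lt_omega0_opow_self {β : Ordinal} (h : β < eps0) : β < ω ^ β := by
  rw [eps0_eq_epsilon_zero] at h
  exact lt_of_not_ge fun hle => (epsilon_zero_le_of_omega0_opow_le hle).not_gt h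

lemma ell_zero : ell 0 = 0 := by simp [ell, CNF.zero_right]

lemma ell_le_log (β : Ordinal) : ell β ≤ log ω β := by
  rw [ell]
  rcases List.eq_nil_or_concat ((CNF ω β).map Prod.fst) with hl | ⟨L, e, hl⟩
  · simp [hl]
  · have he : e ∈ (CNF ω β).map Prod.fst := by simp only [hl, List.concat_eq_append,
      List.mem_append, List.mem_singleton, or_true]
    obtain ⟨p, hp, rfl⟩ := List.mem_map.1 he
    rw [hl, List.concat_eq_append, List.getLastD_concat]
    exact CNF.fst_le_log hp

lemma ell_omega0_opow (γ : Ordinal) : ell (ω ^ γ) = γ := by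
  simp [ell, CNF.ne_zero (opow_ne_zero γ omega0_ne_zero), log_opow one_lt_omega0, mod_self,
    CNF.zero_right]

lemma ell_lt_self {β : Ordinal} (h0 : β ≠ 0) (h : β < eps0) : ell β < β :=
  (ell_le_log β).trans_lt <| (lt_opow_iff_log_lt one_lt_omega0 h0).1 (lt_omega0_opow_self h)

lemma IgMem.zero : IgMem 0 :=
  ⟨fun _ => eps0_eq_epsilon_zero ▸ epsilon_pos 0, fun _ => by simp [ell_zero]⟩

lemma exists_igMem_ge (N : ℕ) (m : ℕ → Ordinal) (hm : ∀ i, m i < eps0)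
    (hN : ∀ i, N ≤ i → m i = 0) : ∃ d, IgMem d ∧ m ≤ d := by
  induction N generalizing m with
  | zero => exact ⟨0, IgMem.zero, fun i => (hN i i.zero_le).le⟩
  | succ N ih =>
    obtain ⟨d, hd, hmd⟩ := ih (fun i => m (i + 1)) (fun i => hm (i + 1))
      (fun i hi => hN (i + 1) (by omega))
    have head_lt : d 0 + m 0 < eps0 := add_lt_eps0 (hd.1 0) (hm 0)
    refine ⟨fun | 0 => ω ^ (d 0 + m 0) | i + 1 => d i, ⟨?_, ?_⟩, ?_⟩
    · rintro (_ | i)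
      exacts [omega0_opow_lt_eps0 head_lt, hd.1 i]
    · rintro (_ | i)
      exacts [(ell_omega0_opow _).symm ▸ le_self_add, hd.2 i]
    · rintro (_ | i)
      exacts [le_add_self.trans (right_le_opow _ one_lt_omega0), hmd i]

lemma IgMem.eventually_eq_zero {a : ℕ → Ordinal} (ha : IgMem a) :
    ∃ N, ∀ i, N ≤ i → a i = 0 := by
  obtain ⟨N, hN⟩ := WellFounded.not_rel_apply_succ (r := (· < ·)) a
  have hzero : a N = 0 := by
    by_contra h
    exact hN ((ha.2 N).trans_lt (ell_lt_self h (ha.1 N)))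
  refine ⟨N, fun i hi => ?_⟩
  induction i, hi using Nat.le_induction with
  | base => exact hzero
  | succ i _ ih => simpa [ih, ell_zero] using ha.2 i

lemma IgMem.exists_ge {a b : ℕ → Ordinal} (ha : IgMem a) (hb : IgMem b) :
    ∃ d, IgMem d ∧ a ≤ d ∧ b ≤ d := by
  obtain ⟨Na, hNa⟩ := ha.eventually_eq_zero
  obtain ⟨Nb, hNb⟩ := hb.eventually_eq_zero
  obtain ⟨d, hd, hmd⟩ := exists_igMem_ge (max Na Nb) (a ⊔ b) (fun i => max_lt (ha.1 i) (hb.1 i))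
    fun i hi => by simp [hNa i (le_of_max_le_left hi), hNb i (le_of_max_le_right hi)]
  exact ⟨d, hd, sup_le_iff.1 hmd⟩

lemma igMem_sInf {S : Set (ℕ → Ordinal)} (hS : S.Nonempty) (h : ∀ d ∈ S, IgMem d) :
    IgMem (sInf S) := by
  have attained (i : ℕ) : ∃ d ∈ S, sInf S i = d i := by
    obtain ⟨d, hd, hdi⟩ := csInf_mem (hS.image (Function.eval i))
    exact ⟨d, hd, sInf_apply_eq_sInf_image.trans hdi.symm⟩
  refine ⟨fun i => ?_, fun i => ?_⟩
  · obtain ⟨d, hd, hi⟩ := attained i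
    exact hi ▸ (h d hd).1 i
  · obtain ⟨d, hd, hi⟩ := attained i
    calc sInf S (i + 1) ≤ d (i + 1) := csInf_le (OrderBot.bddBelow S) hd (i + 1)
      _ ≤ ell (d i) := (h d hd).2 i
      _ = ell (sInf S i) := by rw [hi]

/-- `(I, ≤)` with `α ≤ β` iff `∀ n, αₙ ≥ βₙ` is a meet-semilattice: any two
elements have a greatest lower bound. -/
theorem stmt_9 (a b : ℕ → Ordinal) (ha : IgMem a) (hb : IgMem b) :
    ∃ c : ℕ → Ordinal, IgMem c ∧ (∀ n, a n ≤ c n) ∧ (∀ n, b n ≤ c n) ∧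
      ∀ d : ℕ → Ordinal, IgMem d → (∀ n, a n ≤ d n) → (∀ n, b n ≤ d n) →
        ∀ n, c n ≤ d n := by
  set S := {d | IgMem d ∧ a ≤ d ∧ b ≤ d}
  have hS : S.Nonempty := ha.exists_ge hb
  refine ⟨sInf S, igMem_sInf hS fun _ he => he.1, le_csInf hS fun _ he => he.2.1,
    le_csInf hS fun _ he => he.2.2, fun d hd hda hdb => ?_⟩
  exact csInf_le (OrderBot.bddBelow S) ⟨hd, hda, hdb⟩
end

section
/- If α is a point on the main axis of the Ignatiev frame (α_{i+1} = ℓ(αᵢ) for all i) and β = ◇ₙ(α), then C_β = Rₙ⁻¹(C_α): a point γ ∈ I satisfies γⱼ ≥ βⱼ for all j if and only if there exists δ ∈ I with γ Rₙ δ and δⱼ ≥ αⱼ for all j. -/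
/-!
Every nonzero ordinal `x` has the form `y + ω ^ ℓ x`, and `ℓ (y + ω ^ e) = e` because `ω ^ e` divides
`y + ω ^ e` while `ω ^ (e + 1)` does not. Consequently, if `α ≤ x` and `ℓ α < e ≤ ℓ x`, then
`α + ω ^ e ≤ x`.

If `β ≤ γ`, then `αₙ < βₙ ≤ γₙ`, and the sequence that agrees with `γ` below `n` and with `α` from `n`
on is a witness `δ`. Conversely, given `δ`, we show `βⱼ ≤ γⱼ` by downward induction from `n`:
`βₙ = αₙ + 1 ≤ γₙ`, and for `j < n` the inequality above applies to `βⱼ = αⱼ + ω ^ βⱼ₊₁`, since on the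
main axis `ℓ αⱼ = αⱼ₊₁ < βⱼ₊₁ ≤ γⱼ₊₁ ≤ ℓ γⱼ`.
-/

open Ordinal

/-- `diaSpec n a b` says that `b = ◇ₙ(a)`: `bᵢ = 0` for `i > n` and
`bᵢ = aᵢ + ω ^ b_{i+1}` for `i ≤ n` (downward recursion, with `b (n+1) = 0`). -/
def diaSpec (n : ℕ) (a b : ℕ → Ordinal) : Prop :=
  (∀ i, n < i → b i = 0) ∧ ∀ i, i ≤ n → b i = a i + omega0 ^ b (i + 1)

/-- `Rrel i d g` : `d Rᵢ g` in the Ignatiev frame. -/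
def Rrel (i : ℕ) (d g : ℕ → Ordinal) : Prop :=
  (∀ j, j < i → d j = g j) ∧ g i < d i

lemma succ_mod_omega0_ne_zero (s : Ordinal) : (s + 1) % ω ≠ 0 := by
  have hlt : s % ω + 1 < ω :=
    isSuccLimit_omega0.add_one_lt (mod_lt s omega0_ne_zero)
  rw [← div_add_mod s ω, add_assoc, mul_add_mod_self, mod_eq_of_lt hlt]
  exact (add_pos_of_right one_pos _).ne'

lemma add_omega0_opow_eq_opow_mul (y e : Ordinal) :
    y + ω ^ e = ω ^ e * (y / ω ^ e + 1) := by
  conv_lhs => rw [← div_add_mod y (ω ^ e)]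
  rw [add_assoc, add_omega0_opow (mod_lt y (opow_ne_zero e omega0_ne_zero)), mul_add_one]

lemma not_omega0_opow_succ_dvd_add_omega0_opow (y e : Ordinal) :
    ¬ ω ^ (e + 1) ∣ y + ω ^ e := by
  rw [dvd_iff_mod_eq_zero, add_omega0_opow_eq_opow_mul, opow_add_one, mul_mod_mul]
  exact mul_ne_zero (opow_ne_zero e omega0_ne_zero) (succ_mod_omega0_ne_zero _)

lemma le_of_add_omega0_opow_eq {y z e f : Ordinal} (h : y + ω ^ e = z + ω ^ f) : f ≤ e :=
  le_of_not_gt fun hef => not_omega0_opow_succ_dvd_add_omega0_opow y e <| h ▸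
    (opow_dvd_opow ω (Order.add_one_le_of_lt hef)).trans ⟨_, add_omega0_opow_eq_opow_mul z f⟩

lemma exists_eq_add_omega0_opow_ell {x : Ordinal} (hx : x ≠ 0) : ∃ y, x = y + ω ^ ell x := by
  induction x using WellFoundedLT.induction with
  | _ x IH =>
  set L := log ω x
  have hcnf : CNF ω x = (L, x / ω ^ L) :: CNF ω (x % ω ^ L) := CNF.ne_zero hx
  rcases eq_or_ne (x % ω ^ L) 0 with hr | hr
  · have hell : ell x = L := by simp [ell, hcnf, hr, CNF.zero_right]
    obtain ⟨k, hk⟩ := lt_omega0.1 (div_opow_log_lt x one_lt_omega0)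
    obtain ⟨k, rfl⟩ : ∃ k', k = k' + 1 :=
      Nat.exists_eq_add_one.2 (by exact_mod_cast hk ▸ div_opow_log_pos ω hx)
    refine ⟨ω ^ L * k, ?_⟩
    conv_lhs => rw [← div_add_mod x (ω ^ L), hr, add_zero, hk]
    rw [hell]
    push_cast
    rw [mul_add_one]
  · have hell : ell x = ell (x % ω ^ L) := by simp [ell, hcnf, CNF.ne_zero hr]
    obtain ⟨y, hy⟩ := IH _ (mod_opow_log_lt_self ω hx) hr
    refine ⟨ω ^ L * (x / ω ^ L) + y, ?_⟩
    rw [hell, add_assoc, ← hy, div_add_mod]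

lemma ell_add_omega0_opow (y e : Ordinal) : ell (y + ω ^ e) = e := by
  have hx : y + ω ^ e ≠ 0 := (opow_pos e omega0_pos).trans_le le_add_self |>.ne'
  obtain ⟨z, hz⟩ := exists_eq_add_omega0_opow_ell hx
  exact le_antisymm (le_of_add_omega0_opow_eq hz) (le_of_add_omega0_opow_eq hz.symm)

lemma ell_add_of_ne_zero (y : Ordinal) {z : Ordinal} (hz : z ≠ 0) : ell (y + z) = ell z := by
  obtain ⟨z', hz'⟩ := exists_eq_add_omega0_opow_ell hz
  rw [hz', ← add_assoc, ell_add_omega0_opow, ell_add_omega0_opow]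

lemma omega0_opow_ell_le {z : Ordinal} (hz : z ≠ 0) : ω ^ ell z ≤ z := by
  obtain ⟨z', hz'⟩ := exists_eq_add_omega0_opow_ell hz
  conv_rhs => rw [hz']
  exact le_add_self

lemma add_omega0_opow_le {a x e : Ordinal} (hax : a ≤ x) (hae : ell a < e) (hex : e ≤ ell x) :
    a + ω ^ e ≤ x := by
  obtain ⟨z, rfl⟩ := exists_add_of_le hax
  have hz : z ≠ 0 := by
    rintro rfl
    rw [add_zero] at hex
    exact (hex.trans_lt hae).false
  rw [ell_add_of_ne_zero a hz] at hex
  exact add_le_add_right ((opow_le_opow_right omega0_pos hex).trans (omega0_opow_ell_le hz)) a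

namespace diaSpec

variable {n : ℕ} {a b : ℕ → Ordinal}

lemma lt_of_le (hb : diaSpec n a b) {i : ℕ} (hi : i ≤ n) : a i < b i := by
  rw [hb.2 i hi]
  exact lt_add_of_pos_right _ (opow_pos _ omega0_pos)

lemma le_of_le_of_lt (hb : diaSpec n a b) (axis : ∀ i, a (i + 1) = ell (a i))
    {g : ℕ → Ordinal} (hg : ∀ i, g (i + 1) ≤ ell (g i)) (hag : ∀ j < n, a j ≤ g j)
    (hn : a n < g n) (j : ℕ) : b j ≤ g j := by
  rcases lt_or_ge n j with hj | hj
  · rw [hb.1 j hj]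
    exact zero_le
  induction hj using Nat.decreasingInduction with
  | self =>
    rw [hb.2 n le_rfl, hb.1 (n + 1) (lt_add_one n), opow_zero]
    exact Order.add_one_le_of_lt hn
  | of_succ k hk ih =>
    rw [hb.2 k hk.le]
    exact add_omega0_opow_le (hag k hk) (axis k ▸ hb.lt_of_le hk) (ih.trans (hg k))

end diaSpec

def splice (n : ℕ) (g a : ℕ → Ordinal) (j : ℕ) : Ordinal :=
  if j < n then g j else a j

section splice

variable {n : ℕ} {a g : ℕ → Ordinal}

lemma IgMem.splice_of_le (hg : IgMem g) (ha : IgMem a) (h : a n ≤ g n) : IgMem (splice n g a) := by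
  refine ⟨fun i => ?_, fun i => ?_⟩
  · unfold splice
    split_ifs
    exacts [hg.1 i, ha.1 i]
  · rcases lt_trichotomy (i + 1) n with hi | rfl | hi
    · simpa [splice, hi, (lt_add_one i).trans hi] using hg.2 i
    · simpa [splice] using h.trans (hg.2 i)
    · simpa [splice, hi.not_gt, (Nat.lt_succ_iff.1 hi).not_gt] using ha.2 i

lemma rrel_splice (h : a n < g n) : Rrel n g (splice n g a) :=
  ⟨fun j hj => by simp [splice, hj], by simpa [splice] using h⟩

lemma le_splice (hag : ∀ j < n, a j ≤ g j) (j : ℕ) : a j ≤ splice n g a j := by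
  unfold splice
  split_ifs with hj
  exacts [hag j hj, le_rfl]

end splice

/-- For `α` on the main axis and `β = ◇ₙ(α)`, `C_β = Rₙ⁻¹(C_α)`. -/
theorem stmt_12 (n : ℕ) (a b : ℕ → Ordinal) (ha : IgMem a)
    (axis : ∀ i, a (i + 1) = ell (a i)) (hb : diaSpec n a b) :
    ∀ g : ℕ → Ordinal, IgMem g →
      ((∀ j, b j ≤ g j) ↔
        ∃ d : ℕ → Ordinal, IgMem d ∧ Rrel n g d ∧ ∀ j, a j ≤ d j) := by
  intro g hg
  constructor
  · intro hbg
    have hag : ∀ j ≤ n, a j < g j := fun j hj => (hb.lt_of_le hj).trans_le (hbg j)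
    exact ⟨splice n g a, hg.splice_of_le ha (hag n le_rfl).le, rrel_splice (hag n le_rfl),
      le_splice fun j hj => (hag j hj.le).le⟩
  · rintro ⟨d, -, ⟨hgd, hdn⟩, had⟩
    exact hb.le_of_le_of_lt axis hg.2 (fun j hj => hgd j hj ▸ had j) ((had n).trans_lt hdn)
end
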